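/- For every connected graph G there exists a global amoeba H having a connected component isomorphic to G. -/

import Mathlib

open SimpleGraph Equiv

/-- The labeled copy `G_σ`, with edges `v_{σ⁻¹ i} v_{σ⁻¹ j}` for edges `v_i v_j` of `G`. -/
def copyG {V : Type*} (G : SimpleGraph V) (σ : Equiv.Perm V) : SimpleGraph V where
  Adj a b := G.Adj (σ a) (σ b)
  symm := ⟨fun _ _ h => G.symm.symm _ _ h⟩
  loopless := ⟨fun _ h => G.loopless.irrefl _ h⟩

/-- The graph `G - v_r v_s + v_k v_l`. -/
def replaceG {V : Type*} (G : SimpleGraph V) (r s k l : V) : SimpleGraph V :=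
  SimpleGraph.fromEdgeSet ((G.edgeSet \ {s(r, s)}) ∪ {s(k, l)})

/-- The edge-replacement `rs → kl` is feasible: `v_r v_s ∈ E(G)`, `v_k v_l` is a non-edge or
`{k,l} = {r,s}`, and `G - v_r v_s + v_k v_l ≅ G`. -/
def IsFeasible {V : Type*} (G : SimpleGraph V) (r s k l : V) : Prop :=
  G.Adj r s ∧ (Gᶜ.Adj k l ∨ s(k, l) = s(r, s)) ∧ Nonempty (replaceG G r s k l ≃g G)

/-- The permutations realizing feasible edge-replacements of `G`. -/
def feasiblePerms {V : Type*} (G : SimpleGraph V) : Set (Equiv.Perm V) :=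
  {σ | ∃ r s k l, IsFeasible G r s k l ∧ copyG G σ = replaceG G r s k l}

/-- The group `S_G` generated by all permutations realizing feasible edge-replacements. -/
def ampGroup {V : Type*} (G : SimpleGraph V) : Subgroup (Equiv.Perm V) :=
  Subgroup.closure (feasiblePerms G)

/-- `G` is a local amoeba if `S_G` is the full symmetric group. -/
def LocalAmoeba {V : Type*} (G : SimpleGraph V) : Prop := ampGroup G = ⊤

/-- Disjoint union of two graphs. -/
def sumGraph {V W : Type*} (H : SimpleGraph V) (H' : SimpleGraph W) : SimpleGraph (V ⊕ W) :=
  SimpleGraph.map Sum.inl H ⊔ SimpleGraph.map Sum.inr H'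

/-- `G` together with `t` additional isolated vertices. -/
def addIsolated {V : Type*} (G : SimpleGraph V) (t : ℕ) : SimpleGraph (V ⊕ Fin t) :=
  sumGraph G (⊥ : SimpleGraph (Fin t))

/-- `G` is a global amoeba if `G ∪ tK₁` is a local amoeba for all sufficiently large `t`. -/
def GlobalAmoeba {V : Type*} (G : SimpleGraph V) : Prop :=
  ∃ T : ℕ, ∀ t ≥ T, LocalAmoeba (addIsolated G t)

/-!
Let `Γ = G ⊔ K₂`, enumerate its edges `e₀, …, e_{m-1}`, and let `Γᵢ` be the graph on `V(Γ)` with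
edges `e_q` for `q < i`. The host graph `H` is the disjoint union of the layers `Γ₀, …, Γₘ`; the
last layer `Γₘ = Γ` contains `G` as a union of components. Exchanging the layers `p` and `p + 1`
vertexwise is the edge replacement moving `e_p` from layer `p + 1` to layer `p`, and any two
isolated vertices of `H ∪ tK₁` are exchanged by the trivial replacement of an edge (which exists
thanks to the `K₂`). Every vertex of the edgeless layer `Γ₀` is isolated, so conjugating by layer
exchanges yields the transposition of any vertex with a fixed added isolated vertex, and these
transpositions generate the symmetric group.
-/

section SwapClosure

variable {α : Type*} [DecidableEq α] {S : Subgroup (Perm α)}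

lemma Subgroup.swap_apply_mem {g : Perm α} (hg : g ∈ S) {x y : α} (h : swap x y ∈ S) :
    swap (g x) (g y) ∈ S := by
  rw [swap_apply_apply]
  exact S.mul_mem (S.mul_mem hg h) (S.inv_mem hg)

lemma Subgroup.eq_top_of_forall_swap_mem [Finite α] (a : α) (h : ∀ x, swap x a ∈ S) : S = ⊤ := by
  rw [eq_top_iff, ← Perm.closure_isSwap, Subgroup.closure_le]
  rintro _ ⟨x, y, -, rfl⟩
  exact SubmonoidClass.swap_mem_trans S (h x) (swap_comm a y ▸ h y)

end SwapClosure

section Feasible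

variable {α : Type*} {Γ : SimpleGraph α}

@[simp]
lemma copyG_adj (σ : Perm α) (a b : α) : (copyG Γ σ).Adj a b ↔ Γ.Adj (σ a) (σ b) := Iff.rfl

lemma replaceG_adj (r s k l a b : α) :
    (replaceG Γ r s k l).Adj a b ↔
      ((Γ.Adj a b ∧ s(a, b) ≠ s(r, s)) ∨ s(a, b) = s(k, l)) ∧ a ≠ b := by
  simp only [replaceG, fromEdgeSet_adj, Set.mem_union, Set.mem_sdiff, Set.mem_singleton_iff,
    mem_edgeSet]

lemma replaceG_self {r s : α} (h : Γ.Adj r s) : replaceG Γ r s r s = Γ := by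
  rw [replaceG, Set.sdiff_union_self, Set.union_eq_self_of_subset_right (by simpa using h),
    fromEdgeSet_edgeSet]

lemma mem_feasiblePerms_of_copyG_eq_replaceG {σ : Perm α} {r s k l : α} (hrs : Γ.Adj r s)
    (hkl : Γᶜ.Adj k l ∨ s(k, l) = s(r, s)) (h : copyG Γ σ = replaceG Γ r s k l) :
    σ ∈ feasiblePerms Γ :=
  ⟨r, s, k, l, ⟨hrs, hkl, ⟨h ▸ ⟨σ, Iff.rfl⟩⟩⟩, h⟩

lemma mem_feasiblePerms_of_copyG_eq_self {σ : Perm α} {r s : α} (hrs : Γ.Adj r s)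
    (h : copyG Γ σ = Γ) : σ ∈ feasiblePerms Γ :=
  mem_feasiblePerms_of_copyG_eq_replaceG hrs (Or.inr rfl) (h.trans (replaceG_self hrs).symm)

lemma copyG_swap_of_isolated [DecidableEq α] {x y : α} (hx : ∀ z, ¬Γ.Adj x z)
    (hy : ∀ z, ¬Γ.Adj y z) : copyG Γ (swap x y) = Γ := by
  ext a b
  have hx' : ∀ z, ¬Γ.Adj z x := fun z h => hx z h.symm
  have hy' : ∀ z, ¬Γ.Adj z y := fun z h => hy z h.symm
  simp only [copyG_adj, swap_apply_def]
  split_ifs <;> simp_all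

end Feasible

lemma sumGraph_eq_sum {V W : Type*} (H : SimpleGraph V) (H' : SimpleGraph W) :
    sumGraph H H' = H ⊕g H' := by
  ext (a | a) (b | b) <;> simp [sumGraph, map_adj'] <;> exact Adj.ne

section AddIsolated

variable {α : Type*} {Γ : SimpleGraph α} {t : ℕ}

lemma addIsolated_eq_sum : addIsolated Γ t = Γ ⊕g ⊥ := sumGraph_eq_sum _ _

lemma copyG_addIsolated (σ : Perm α) :
    copyG (addIsolated Γ t) (sumCongr σ (Equiv.refl _)) = addIsolated (copyG Γ σ) t := by
  ext (a | a) (b | b) <;> simp [addIsolated_eq_sum]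

lemma replaceG_addIsolated (r s k l : α) :
    replaceG (addIsolated Γ t) (.inl r) (.inl s) (.inl k) (.inl l) =
      addIsolated (replaceG Γ r s k l) t := by
  ext (a | a) (b | b) <;> simp [addIsolated_eq_sum, replaceG_adj]

lemma sumCongr_mem_feasiblePerms_addIsolated {σ : Perm α} (hσ : σ ∈ feasiblePerms Γ) :
    sumCongr σ (Equiv.refl (Fin t)) ∈ feasiblePerms (addIsolated Γ t) := by
  obtain ⟨r, s, k, l, ⟨hrs, hkl, -⟩, h⟩ := hσ
  refine mem_feasiblePerms_of_copyG_eq_replaceG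
    (r := .inl r) (s := .inl s) (k := .inl k) (l := .inl l) ?_ ?_ ?_
  · simpa [addIsolated_eq_sum]
  · simpa [addIsolated_eq_sum] using hkl
  · rw [copyG_addIsolated, replaceG_addIsolated, h]

lemma addIsolated_not_adj_inr (j : Fin t) (z : α ⊕ Fin t) :
    ¬(addIsolated Γ t).Adj (.inr j) z := by
  cases z <;> simp [addIsolated_eq_sum]

lemma addIsolated_not_adj_inl {a : α} (ha : ∀ z, ¬Γ.Adj a z) (z : α ⊕ Fin t) :
    ¬(addIsolated Γ t).Adj (.inl a) z := by
  cases z <;> simp [addIsolated_eq_sum, ha]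

end AddIsolated

section Layers

variable {α ι : Type*}

def layerSum (F : ι → SimpleGraph α) : SimpleGraph (α × ι) where
  Adj x y := x.2 = y.2 ∧ (F x.2).Adj x.1 y.1
  symm := ⟨by
    rintro ⟨a, i⟩ ⟨b, j⟩ ⟨rfl, h⟩
    exact ⟨rfl, h.symm⟩⟩
  loopless := ⟨fun _ h => h.2.ne rfl⟩

@[simp]
lemma layerSum_adj (F : ι → SimpleGraph α) (a b : α) (i j : ι) :
    (layerSum F).Adj (a, i) (b, j) ↔ i = j ∧ (F i).Adj a b := Iff.rfl

lemma copyG_layerSum (F : ι → SimpleGraph α) (τ : Perm ι) :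
    copyG (layerSum F) (prodCongr (Equiv.refl α) τ) = layerSum (F ∘ τ) := by
  ext ⟨a, i⟩ ⟨b, j⟩
  simp [τ.injective.eq_iff]

variable [DecidableEq ι] {F : ι → SimpleGraph α} {i j : ι} {u w : α}

lemma layerSum_comp_swap (hij : i ≠ j) (hF : F j = F i ⊔ edge u w) (hnot : ¬(F i).Adj u w) :
    layerSum (F ∘ swap i j) = replaceG (layerSum F) (u, j) (w, j) (u, i) (w, i) := by
  ext ⟨a, k⟩ ⟨b, l⟩
  rcases eq_or_ne k l with rfl | hkl
  · rcases eq_or_ne a b with rfl | hab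
    · simp
    rcases eq_or_ne k i with rfl | hki
    · simp [replaceG_adj, hF, hij, edge_adj, hab]
    rcases eq_or_ne k j with rfl | hkj
    · have hnot' : ¬(F i).Adj w u := fun h => hnot h.symm
      simp [replaceG_adj, hF, hki, edge_adj, hab]
      grind
    · simp [replaceG_adj, swap_apply_of_ne_of_ne hki hkj, hab, hki, hkj]
  · simp [replaceG_adj, hkl]
    grind

lemma prodCongr_swap_mem_feasiblePerms (hij : i ≠ j) (huw : u ≠ w) (hF : F j = F i ⊔ edge u w)
    (hnot : ¬(F i).Adj u w) :
    prodCongr (Equiv.refl α) (swap i j) ∈ feasiblePerms (layerSum F) :=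
  mem_feasiblePerms_of_copyG_eq_replaceG (r := (u, j)) (s := (w, j)) (k := (u, i)) (l := (w, i))
    (by simp [hF, edge_adj, huw]) (Or.inl (by simp [hnot, huw]))
    ((copyG_layerSum F _).trans (layerSum_comp_swap hij hF hnot))

end Layers

section PrefixGraphs

variable {α : Type*} {m : ℕ} (e : Fin m → Sym2 α)

def prefixGraph (i : Fin (m + 1)) : SimpleGraph α := fromEdgeSet (e '' {q | q.castSucc < i})

lemma prefixGraph_adj (i : Fin (m + 1)) (u w : α) :
    (prefixGraph e i).Adj u w ↔ (∃ q, q.castSucc < i ∧ e q = s(u, w)) ∧ u ≠ w := by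
  simp [prefixGraph]

lemma prefixGraph_zero : prefixGraph e 0 = ⊥ := by
  ext u w
  simp [prefixGraph_adj]

lemma prefixGraph_last : prefixGraph e (Fin.last m) = fromEdgeSet (Set.range e) := by
  simp [prefixGraph, Fin.castSucc_lt_last]

lemma prefixGraph_succ (p : Fin m) :
    prefixGraph e p.succ = prefixGraph e p.castSucc ⊔ fromEdgeSet {e p} := by
  ext u w
  simp [prefixGraph_adj, Fin.castSucc_lt_succ_iff, le_iff_lt_or_eq, or_and_right, exists_or,
    eq_comm]

variable {e}

lemma prodCongr_swap_mem_feasiblePerms_prefixGraph (he : Function.Injective e) {p : Fin m}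
    (hd : ¬(e p).IsDiag) :
    prodCongr (Equiv.refl α) (swap p.castSucc p.succ) ∈
      feasiblePerms (layerSum (prefixGraph e)) := by
  obtain ⟨u, w, hp⟩ : ∃ u w, e p = s(u, w) := Sym2.exists.1 ⟨_, rfl⟩
  rw [hp, Sym2.mk_isDiag_iff] at hd
  refine prodCongr_swap_mem_feasiblePerms (Fin.castSucc_lt_succ).ne hd
    (by rw [prefixGraph_succ, hp]; rfl) ?_
  rw [prefixGraph_adj]
  rintro ⟨⟨q, hq, hqp⟩, -⟩
  rw [← hp] at hqp
  exact hq.ne (congrArg Fin.castSucc (he hqp))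

end PrefixGraphs

theorem globalAmoeba_layerSum_prefixGraph {α : Type*} [Finite α] {m : ℕ} {e : Fin m → Sym2 α}
    (he : Function.Injective e) (hd : ∀ q, ¬(e q).IsDiag) (hm : 0 < m) :
    GlobalAmoeba (layerSum (prefixGraph e)) := by
  classical
  obtain ⟨u, w, huw⟩ : ∃ u w, e ⟨0, hm⟩ = s(u, w) := Sym2.exists.1 ⟨_, rfl⟩
  refine ⟨1, fun t ht => ?_⟩
  set Γ := addIsolated (layerSum (prefixGraph e)) t
  have hedge : Γ.Adj (.inl (u, Fin.last m)) (.inl (w, Fin.last m)) := by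
    have := hd ⟨0, hm⟩
    rw [huw, Sym2.mk_isDiag_iff] at this
    simpa [Γ, addIsolated_eq_sum, prefixGraph_adj, this] using ⟨_, huw⟩
  have hswap : ∀ x y, (∀ z, ¬Γ.Adj x z) → (∀ z, ¬Γ.Adj y z) → swap x y ∈ ampGroup Γ :=
    fun x y hx hy => Subgroup.subset_closure
      (mem_feasiblePerms_of_copyG_eq_self hedge (copyG_swap_of_isolated hx hy))
  let o : α × Fin (m + 1) ⊕ Fin t := .inr ⟨0, ht⟩
  have hlayer : ∀ a i, swap (.inl (a, i)) o ∈ ampGroup Γ := by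
    intro a i
    induction i using Fin.induction with
    | zero =>
      exact hswap _ _ (addIsolated_not_adj_inl (by simp [prefixGraph_zero]))
        (addIsolated_not_adj_inr _)
    | succ p ih =>
      have hp : _ ∈ ampGroup Γ := Subgroup.subset_closure <| sumCongr_mem_feasiblePerms_addIsolated
        (prodCongr_swap_mem_feasiblePerms_prefixGraph he (hd p))
      simpa [o] using Subgroup.swap_apply_mem hp ih
  refine Subgroup.eq_top_of_forall_swap_mem o ?_
  rintro (⟨a, i⟩ | j)
  · exact hlayer a i
  · exact hswap _ _ (addIsolated_not_adj_inr _) (addIsolated_not_adj_inr _)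

lemma exists_prefixGraph_last_eq {α : Type*} [Finite α] (Γ : SimpleGraph α) :
    ∃ (m : ℕ) (e : Fin m → Sym2 α), Function.Injective e ∧ (∀ q, ¬(e q).IsDiag) ∧
      prefixGraph e (Fin.last m) = Γ := by
  let E := (Finite.equivFin Γ.edgeSet).symm
  refine ⟨_, Subtype.val ∘ E, Subtype.val_injective.comp E.injective,
    fun q => Γ.not_isDiag_of_mem_edgeSet (E q).2, ?_⟩
  rw [prefixGraph_last, Set.range_comp, E.range_eq_univ, Set.image_univ, Subtype.range_coe,
    fromEdgeSet_edgeSet]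

theorem exists_globalAmoeba_layerSum {α : Type*} [Finite α] {Γ : SimpleGraph α} {u w : α}
    (huw : Γ.Adj u w) :
    ∃ (m : ℕ) (F : Fin (m + 1) → SimpleGraph α), GlobalAmoeba (layerSum F) ∧
      F (Fin.last m) = Γ := by
  obtain ⟨m, e, he, hd, hlast⟩ := exists_prefixGraph_last_eq Γ
  refine ⟨m, prefixGraph e, globalAmoeba_layerSum_prefixGraph he hd ?_, hlast⟩
  rw [← hlast, prefixGraph_adj] at huw
  obtain ⟨⟨q, -⟩, -⟩ := huw
  exact q.pos

theorem stmt17_general {V : Type} [Fintype V] (G : SimpleGraph V) :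
    ∃ (W : Type) (_ : Fintype W) (H : SimpleGraph W), GlobalAmoeba H ∧
      ∃ f : G ↪g H, ∀ (a : V) (w : W), H.Adj (f a) w → ∃ b : V, w = f b := by
  obtain ⟨m, F, hF, hlast⟩ :=
    exists_globalAmoeba_layerSum (Γ := G ⊕g (⊤ : SimpleGraph (Fin 2))) (u := .inr 0) (w := .inr 1)
      (by simp)
  let f : G ↪g layerSum F :=
    ⟨Function.Embedding.inl.trans (Function.Embedding.sectL _ (Fin.last m)), by simp [hlast]⟩
  refine ⟨_, inferInstance, layerSum F, hF, f, ?_⟩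
  rintro a ⟨b | b, i⟩ h <;> simp [f, hlast] at h
  exact ⟨b, by simp [f, h.1]⟩

theorem stmt17 {V : Type} [Fintype V] (G : SimpleGraph V) (hG : G.Connected) :
    ∃ (W : Type) (_ : Fintype W) (H : SimpleGraph W), GlobalAmoeba H ∧
      ∃ f : G ↪g H, ∀ (a : V) (w : W), H.Adj (f a) w → ∃ b : V, w = f b :=
  stmt17_general G
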